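/- arXiv:1711.07256 — 8 statements merged into one kernel-verified Lean document; each statement's English description precedes it below -/
import Mathlib

section
/- Let H be a Hilbert space, φ ∈ C¹(H), ψ_τ := φ_τ - φ with ℓ_τ := Lip[ψ_τ] < ∞, τ > 0, and let U, W ∈ H satisfy the minimality condition: (1/(2τ))|W - U|² + φ_τ(W) ≤ (1/(2τ))|V - U|² + φ_τ(V) for all V ∈ H. Then |(W - U)/τ + ∇φ(W)| ≤ ℓ_τ. -/
/-! With `f V = ‖V - U‖² / (2τ) + φ V`, minimality of `W` and the Lipschitz bound on `φτ - φ`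
give `f W ≤ f V + ℓ ‖V - W‖` for all `V`, and `∇f W = (W - U) / τ + ∇φ W`. At a point where a
differentiable function is calm from below in this sense, the first-order expansion in the
directions `±v` bounds `|f' v|` by `(ℓ + ε) ‖v‖` for small `v`, hence `‖f'‖ ≤ ℓ`. -/

open Filter Topology

section

variable {E : Type*} [NormedAddCommGroup E] [NormedSpace ℝ E]

theorem ContinuousLinearMap.opNorm_le_of_eventually_neg_apply_le {f : StrongDual ℝ E} {C : ℝ}
    (hC : 0 ≤ C) (hf : ∀ᶠ y in 𝓝 0, -f y ≤ C * ‖y‖) : ‖f‖ ≤ C := by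
  refine opNorm_le_of_nhds_zero hC ?_
  have hf_neg : ∀ᶠ y in 𝓝 0, -f (-y) ≤ C * ‖-y‖ :=
    (continuous_neg.tendsto' 0 0 neg_zero).eventually hf
  filter_upwards [hf, hf_neg] with y hy hy_neg
  rw [map_neg, neg_neg, norm_neg] at hy_neg
  exact abs_le.2 ⟨by linarith, hy_neg⟩

theorem HasFDerivAt.norm_le_of_isLocalMin_add_mul_norm_sub {f : E → ℝ} {f' : StrongDual ℝ E}
    {x₀ : E} {C : ℝ} (hf : HasFDerivAt f f' x₀) (hC : 0 ≤ C)
    (hmin : IsLocalMin (fun x => f x + C * ‖x - x₀‖) x₀) : ‖f'‖ ≤ C := by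
  refine le_of_forall_pos_le_add fun ε hε =>
    f'.opNorm_le_of_eventually_neg_apply_le (add_nonneg hC hε.le) ?_
  have hmin₀ : ∀ᶠ y in 𝓝 0, f x₀ ≤ f (x₀ + y) + C * ‖y‖ := by
    rw [IsLocalMin, IsMinFilter, ← map_add_left_nhds_zero x₀, eventually_map] at hmin
    simpa using hmin
  filter_upwards [hmin₀,
    Asymptotics.isLittleO_iff.1 (hasFDerivAt_iff_isLittleO_nhds_zero.1 hf) hε] with y hy hyo
  rw [Real.norm_eq_abs] at hyo
  linarith [(abs_le.1 hyo).2]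

end

section

variable {H : Type*} [NormedAddCommGroup H] [InnerProductSpace ℝ H] [CompleteSpace H]

theorem HasGradientAt.norm_le_of_isLocalMin_add_mul_norm_sub {f : H → ℝ} {g x₀ : H} {C : ℝ}
    (hf : HasGradientAt f g x₀) (hC : 0 ≤ C)
    (hmin : IsLocalMin (fun x => f x + C * ‖x - x₀‖) x₀) : ‖g‖ ≤ C := by
  simpa using hf.hasFDerivAt.norm_le_of_isLocalMin_add_mul_norm_sub hC hmin

theorem hasGradientAt_norm_sub_sq (U x : H) :
    HasGradientAt (fun y => ‖y - U‖ ^ 2) ((2 : ℝ) • (x - U)) x := by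
  rw [hasGradientAt_iff_hasFDerivAt]
  refine ((hasFDerivAt_id x).sub_const U).norm_sq.congr_fderiv ?_
  ext v
  simp

theorem HasGradientAt.add {f g : H → ℝ} {f' g' x : H} (hf : HasGradientAt f f' x)
    (hg : HasGradientAt g g' x) : HasGradientAt (fun y => f y + g y) (f' + g') x := by
  rw [hasGradientAt_iff_hasFDerivAt, map_add]
  exact hf.hasFDerivAt.add hg.hasFDerivAt

theorem HasGradientAt.const_mul {f : H → ℝ} {f' x : H} (c : ℝ) (hf : HasGradientAt f f' x) :
    HasGradientAt (fun y => c * f y) (c • f') x := by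
  rw [hasGradientAt_iff_hasFDerivAt, map_smul]
  exact hf.hasFDerivAt.const_mul c

end

theorem minimizing_movement_euler_estimate_general
    {H : Type*} [NormedAddCommGroup H] [InnerProductSpace ℝ H] [CompleteSpace H]
    (φ φτ : H → ℝ) (hφ : ContDiff ℝ 1 φ)
    (τ ℓ : ℝ) (hℓ : 0 ≤ ℓ)
    (hLip : ∀ x y : H, (φτ y - φ y) - (φτ x - φ x) ≤ ℓ * ‖y - x‖)
    (U W : H)
    (hmin : ∀ V : H, 1 / (2 * τ) * ‖W - U‖ ^ 2 + φτ W ≤ 1 / (2 * τ) * ‖V - U‖ ^ 2 + φτ V) :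
    ‖τ⁻¹ • (W - U) + gradient φ W‖ ≤ ℓ := by
  have hgrad : HasGradientAt (fun V => 1 / (2 * τ) * ‖V - U‖ ^ 2 + φ V)
      (τ⁻¹ • (W - U) + gradient φ W) W := by
    have hquad := (hasGradientAt_norm_sub_sq U W).const_mul (1 / (2 * τ))
    rw [smul_smul, show 1 / (2 * τ) * 2 = τ⁻¹ by ring] at hquad
    exact hquad.add ((hφ.differentiable one_ne_zero).differentiableAt.hasGradientAt)
  refine hgrad.norm_le_of_isLocalMin_add_mul_norm_sub hℓ (Eventually.of_forall fun V => ?_)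
  simp only [sub_self, norm_zero, mul_zero, add_zero]
  linarith [hmin V, hLip W V]

theorem minimizing_movement_euler_estimate
    {H : Type*} [NormedAddCommGroup H] [InnerProductSpace ℝ H] [CompleteSpace H]
    (φ φτ : H → ℝ) (hφ : ContDiff ℝ 1 φ)
    (τ ℓ : ℝ) (hτ : 0 < τ) (hℓ : 0 ≤ ℓ)
    (hLip : ∀ x y : H, (φτ y - φ y) - (φτ x - φ x) ≤ ℓ * ‖y - x‖)
    (U W : H)
    (hmin : ∀ V : H, 1 / (2 * τ) * ‖W - U‖ ^ 2 + φτ W ≤ 1 / (2 * τ) * ‖V - U‖ ^ 2 + φτ V) :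
    ‖τ⁻¹ • (W - U) + gradient φ W‖ ≤ ℓ :=
  minimizing_movement_euler_estimate_general φ φτ hφ τ ℓ hℓ hLip U W hmin
end

section
/- Let H be a Hilbert space, φ ∈ C¹(H), u₀ ∈ H, τ* > 0, and suppose inf_V { (1/(2τ*))|V - u₀|² + φ_{τ*}(V) } = -A > -∞, where Lip[φ_{τ*} - φ] ≤ ℓ. Then φ satisfies the quadratic lower bound: φ(x) ≥ (φ(u₀) - φ_{τ*}(u₀)) - A - ℓ/2 - ((ℓτ* + 1)/(2τ*))|x - u₀|² for every x ∈ H. -/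
/-! Comparing `φ` with `φτ` costs at most `ℓ |x - u₀|` by the Lipschitz bound, and the
infimum bound controls `φτ x` from below by `-A - |x - u₀|² / (2τ*)`. The linear term is then
absorbed into a quadratic one through `|x - u₀| ≤ (1 + |x - u₀|²) / 2`. -/

lemma mul_le_half_add_half_mul_sq {ℓ : ℝ} (hℓ : 0 ≤ ℓ) (r : ℝ) :
    ℓ * r ≤ ℓ / 2 + ℓ / 2 * r ^ 2 := by
  nlinarith [mul_nonneg hℓ (sq_nonneg (r - 1))]

theorem quadratic_lower_bound_from_scheme_general
    {H : Type*} [NormedAddCommGroup H]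
    (φ φτ : H → ℝ)
    (u₀ : H) (τs A ℓ : ℝ) (hτ : 0 < τs) (hℓ : 0 ≤ ℓ)
    (hinf : ∀ V : H, -A ≤ 1 / (2 * τs) * ‖V - u₀‖ ^ 2 + φτ V)
    (hLip : ∀ x y : H, (φτ y - φ y) - (φτ x - φ x) ≤ ℓ * ‖y - x‖) :
    ∀ x : H, (φ u₀ - φτ u₀) - A - ℓ / 2 - ((ℓ * τs + 1) / (2 * τs)) * ‖x - u₀‖ ^ 2 ≤ φ x := by
  intro x
  have hscheme := hinf x
  have hcompare := hLip u₀ x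
  have habsorb := mul_le_half_add_half_mul_sq hℓ ‖x - u₀‖
  have hsplit : (ℓ * τs + 1) / (2 * τs) * ‖x - u₀‖ ^ 2
      = ℓ / 2 * ‖x - u₀‖ ^ 2 + 1 / (2 * τs) * ‖x - u₀‖ ^ 2 := by
    field_simp
  linarith

theorem quadratic_lower_bound_from_scheme
    {H : Type*} [NormedAddCommGroup H] [InnerProductSpace ℝ H] [CompleteSpace H]
    (φ φτ : H → ℝ) (hφ : ContDiff ℝ 1 φ)
    (u₀ : H) (τs A ℓ : ℝ) (hτ : 0 < τs) (hℓ : 0 ≤ ℓ)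
    (hinf : ∀ V : H, -A ≤ 1 / (2 * τs) * ‖V - u₀‖ ^ 2 + φτ V)
    (hLip : ∀ x y : H, (φτ y - φ y) - (φτ x - φ x) ≤ ℓ * ‖y - x‖) :
    ∀ x : H, (φ u₀ - φτ u₀) - A - ℓ / 2 - ((ℓ * τs + 1) / (2 * τs)) * ‖x - u₀‖ ^ 2 ≤ φ x :=
  quadratic_lower_bound_from_scheme_general φ φτ u₀ τs A ℓ hτ hℓ hinf hLip
end

section
/- Let H be a Hilbert space, 𝒰 ⊂ H nonempty compact, φ ∈ C¹(H), λ ≥ 0, η ≥ 0, τ > 0, x ∈ 𝒰, and let y ∈ H be an η-approximate minimizer of w ↦ (1/(2τ))|w - x|² + φ(w) + λ·dist(w, 𝒰), i.e. the value at y exceeds the value at any w by at most η|w - y|. Then the vector ξ := (y - x)/τ + ∇φ(y) satisfies |ξ| ≤ λ + η; moreover, if y ∉ 𝒰 then |ξ| ≥ λ - η. -/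
/-!
The smooth part `g w = ‖w - x‖² / (2τ) + φ w` has gradient `ξ` at `y`. Comparing `y` with
`w = y + t v` and letting `t → 0⁺` gives
`-⟪ξ, v⟫ ≤ λ · limsup (d(y + t v) - d(y)) / t + η ‖v‖`, where `d = dist(·, 𝒰)`.
Since `d` is 1-Lipschitz, `-⟪ξ, v⟫ ≤ (λ + η) ‖v‖` for every `v`, whence `‖ξ‖ ≤ λ + η`.
If `y ∉ 𝒰` and `ŷ` is a nearest point, `d` decreases at unit rate along the segment from `y`
to `ŷ`, so `v = ŷ - y` gives `(λ - η) d(y) ≤ ⟪ξ, ŷ - y⟫ ≤ ‖ξ‖ d(y)` with `d(y) > 0`.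
Only the derivative of `g` as a functional enters, so the argument runs in any real normed
space, with the operator norm in place of `‖ξ‖`.
-/

open Metric Set Filter Topology
open scoped RealInnerProductSpace

section NormedSpace

variable {E : Type*} [NormedAddCommGroup E] [NormedSpace ℝ E]

def IsApproxMinimizer (f : E → ℝ) (η : ℝ) (y : E) : Prop :=
  ∀ w, f y ≤ f w + η * ‖w - y‖

theorem le_fderiv_apply_of_eventually_le {g : E → ℝ} {g' : StrongDual ℝ E} {y v : E} {a : ℝ}
    (hg : HasFDerivAt g g' y) (h : ∀ᶠ t in 𝓝[>] (0 : ℝ), g y + a * t ≤ g (y + t • v)) :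
    a ≤ g' v := by
  refine ge_of_tendsto (hg.hasLineDerivAt v).tendsto_slope_zero_right ?_
  filter_upwards [h, self_mem_nhdsWithin] with t ht (ht0 : 0 < t)
  rw [smul_eq_mul, le_inv_mul_iff₀ ht0]
  linarith

theorem infDist_add_smul_sub_le {U : Set E} {y z : E} (hz : z ∈ U) {t : ℝ} (ht : t ≤ 1) :
    infDist (y + t • (z - y)) U ≤ (1 - t) * dist y z :=
  calc infDist (y + t • (z - y)) U ≤ dist (AffineMap.lineMap y z t) z := by
        rw [AffineMap.lineMap_apply_module', add_comm]
        exact infDist_le_dist_of_mem hz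
    _ = (1 - t) * dist y z := by
        rw [dist_lineMap_right, Real.norm_eq_abs, abs_of_nonneg (by linarith)]

namespace IsApproxMinimizer

variable {g : E → ℝ} {g' : StrongDual ℝ E} {y : E} {lam η : ℝ}

theorem norm_fderiv_le {d : E → ℝ} (hmin : IsApproxMinimizer (fun w => g w + lam * d w) η y)
    (hg : HasFDerivAt g g' y) (hd : LipschitzWith 1 d) (hlam : 0 ≤ lam) (hη : 0 ≤ η) :
    ‖g'‖ ≤ lam + η := by
  have hdir : ∀ v, -((lam + η) * ‖v‖) ≤ g' v := fun v => by
    refine le_fderiv_apply_of_eventually_le hg ?_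
    filter_upwards [self_mem_nhdsWithin] with t (ht : 0 < t)
    have hstep : ‖y + t • v - y‖ = t * ‖v‖ := by
      rw [add_sub_cancel_left, norm_smul, Real.norm_of_nonneg ht.le]
    have hdist : d (y + t • v) ≤ d y + t * ‖v‖ := by
      simpa [dist_eq_norm, norm_smul, Real.norm_of_nonneg ht.le] using hd.le_add_mul (y + t • v) y
    have := hmin (y + t • v)
    dsimp only at this
    rw [hstep] at this
    nlinarith [mul_le_mul_of_nonneg_left hdist hlam]
  refine g'.opNorm_le_bound (by positivity) fun v => abs_le.2 ⟨hdir v, ?_⟩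
  simpa using hdir (-v)

theorem le_norm_fderiv {U : Set E}
    (hmin : IsApproxMinimizer (fun w => g w + lam * infDist w U) η y)
    (hg : HasFDerivAt g g' y) (hU : IsCompact U) (hUne : U.Nonempty) (hy : y ∉ U)
    (hlam : 0 ≤ lam) :
    lam - η ≤ ‖g'‖ := by
  obtain ⟨z, hzU, hz⟩ := hU.exists_infDist_eq_dist hUne y
  have hpos : 0 < dist y z := hz ▸ (hU.isClosed.notMem_iff_infDist_pos hUne).1 hy
  have hdir : (lam - η) * dist y z ≤ g' (z - y) := by
    refine le_fderiv_apply_of_eventually_le hg ?_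
    filter_upwards [Ioo_mem_nhdsGT one_pos] with t ht
    have hstep : ‖y + t • (z - y) - y‖ = t * dist y z := by
      rw [add_sub_cancel_left, norm_smul, Real.norm_of_nonneg ht.1.le, dist_comm, dist_eq_norm]
    have hdist := infDist_add_smul_sub_le (y := y) hzU ht.2.le
    have := hmin (y + t • (z - y))
    dsimp only at this
    rw [hstep, hz] at this
    nlinarith [mul_le_mul_of_nonneg_left hdist hlam]
  have hle : g' (z - y) ≤ ‖g'‖ * dist y z := by
    rw [dist_comm, dist_eq_norm]
    exact (le_abs_self _).trans (g'.le_opNorm _)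
  exact le_of_mul_le_mul_right (hdir.trans hle) hpos

end IsApproxMinimizer

end NormedSpace

theorem hasGradientAt_proximal_add {H : Type*} [NormedAddCommGroup H] [InnerProductSpace ℝ H]
    [CompleteSpace H] {φ : H → ℝ} {φ' y : H} (hφ : HasGradientAt φ φ' y) (x : H) (τ : ℝ) :
    HasGradientAt (fun w => 1 / (2 * τ) * ‖w - x‖ ^ 2 + φ w) (τ⁻¹ • (y - x) + φ') y := by
  rw [hasGradientAt_iff_hasFDerivAt] at hφ ⊢
  refine (((hasFDerivAt_id y).sub_const x).norm_sq.const_mul (1 / (2 * τ))).fun_add hφ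
    |>.congr_fderiv ?_
  ext v
  simp
  ring

theorem penalized_approximate_minimizer_estimate_general
    {H : Type*} [NormedAddCommGroup H] [InnerProductSpace ℝ H] [CompleteSpace H]
    (φ : H → ℝ) (hφ : ContDiff ℝ 1 φ)
    (U : Set H) (hUc : IsCompact U) (hUne : U.Nonempty)
    (lam η τ : ℝ) (hlam : 0 ≤ lam) (hη : 0 ≤ η)
    (x : H) (y : H)
    (hmin : ∀ w : H,
      1 / (2 * τ) * ‖y - x‖ ^ 2 + φ y + lam * Metric.infDist y U ≤
        1 / (2 * τ) * ‖w - x‖ ^ 2 + φ w + lam * Metric.infDist w U + η * ‖w - y‖) :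
    ‖τ⁻¹ • (y - x) + gradient φ y‖ ≤ lam + η ∧
      (y ∉ U → lam - η ≤ ‖τ⁻¹ • (y - x) + gradient φ y‖) := by
  have hg := hasGradientAt_proximal_add ((hφ.differentiable one_ne_zero y).hasGradientAt) x τ
  rw [hasGradientAt_iff_hasFDerivAt] at hg
  have hmin' : IsApproxMinimizer (fun w => 1 / (2 * τ) * ‖w - x‖ ^ 2 + φ w + lam * infDist w U)
      η y := hmin
  rw [← (InnerProductSpace.toDual ℝ H).norm_map]
  exact ⟨IsApproxMinimizer.norm_fderiv_le hmin' hg (lipschitz_infDist_pt U) hlam hη,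
    fun hy => IsApproxMinimizer.le_norm_fderiv hmin' hg hUc hUne hy hlam⟩

theorem penalized_approximate_minimizer_estimate
    {H : Type*} [NormedAddCommGroup H] [InnerProductSpace ℝ H] [CompleteSpace H]
    (φ : H → ℝ) (hφ : ContDiff ℝ 1 φ)
    (U : Set H) (hUc : IsCompact U) (hUne : U.Nonempty)
    (lam η τ : ℝ) (hlam : 0 ≤ lam) (hη : 0 ≤ η) (hτ : 0 < τ)
    (x : H) (hx : x ∈ U) (y : H)
    (hmin : ∀ w : H,
      1 / (2 * τ) * ‖y - x‖ ^ 2 + φ y + lam * Metric.infDist y U ≤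
        1 / (2 * τ) * ‖w - x‖ ^ 2 + φ w + lam * Metric.infDist w U + η * ‖w - y‖) :
    ‖τ⁻¹ • (y - x) + gradient φ y‖ ≤ lam + η ∧
      (y ∉ U → lam - η ≤ ‖τ⁻¹ • (y - x) + gradient φ y‖) :=
  penalized_approximate_minimizer_estimate_general φ hφ U hUc hUne lam η τ hlam hη x y hmin
end

section
/- Let φ : ℝ → ℝ be C¹ (H = ℝ) and u a C¹ solution of u'(t) = -φ'(u(t)) on [0,∞). Then u is monotone: u is either nondecreasing on [0,∞) or nonincreasing on [0,∞). -/
/-!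
Along a gradient flow the energy `φ ∘ u` is nonincreasing, with derivative `-(u')²`. So if
`u a = u c` with `a ≤ c`, the energy is constant on `[a, c]`, hence `u' = 0` there and `u` is
constant on `[a, c]`: the flow never returns to a value it has left. A continuous function with
this property has no strict peak or valley (by the intermediate value theorem, a peak at `y`
between `x` and `z` would give a return to `max (u x) (u z)` across `y`), so it is monotone.
-/

open Set Filter

lemma mem_uIcc_or_mem_uIcc_or_mem_uIcc {δ : Type*} [LinearOrder δ] (a b c : δ) :
    b ∈ uIcc a c ∨ c ∈ uIcc a b ∨ a ∈ uIcc b c := by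
  simp only [mem_uIcc]
  rcases le_total a b with hab | hab <;> rcases le_total b c with hbc | hbc <;>
    rcases le_total a c with hac | hac <;> tauto

lemma ContinuousOn.apply_mem_uIcc_of_eq_imp_eq {α δ : Type*} [ConditionallyCompleteLinearOrder α]
    [TopologicalSpace α] [OrderTopology α] [DenselyOrdered α] [LinearOrder δ] [TopologicalSpace δ]
    [OrderClosedTopology δ] {f : α → δ} {s : Set α} (hf : ContinuousOn f s) (hs : s.OrdConnected)
    (hstay : ∀ a ∈ s, ∀ c ∈ s, ∀ b ∈ Icc a c, f a = f c → f b = f a)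
    {x y z : α} (hx : x ∈ s) (hz : z ∈ s) (hxy : x ≤ y) (hyz : y ≤ z) :
    f y ∈ uIcc (f x) (f z) := by
  have hy : y ∈ s := hs.out hx hz ⟨hxy, hyz⟩
  rcases mem_uIcc_or_mem_uIcc_or_mem_uIcc (f x) (f y) (f z) with h | h | h
  · exact h
  · obtain ⟨w, hw, hwz⟩ := intermediate_value_uIcc (hf.mono (uIcc_of_le hxy ▸ hs.out hx hy)) h
    rw [uIcc_of_le hxy] at hw
    rw [hstay w (hs.out hx hy hw) z hz y ⟨hw.2, hyz⟩ hwz, hwz]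
    exact right_mem_uIcc
  · obtain ⟨w, hw, hwx⟩ := intermediate_value_uIcc (hf.mono (uIcc_of_le hyz ▸ hs.out hy hz)) h
    rw [uIcc_of_le hyz] at hw
    rw [hstay x hx w (hs.out hy hz hw) y ⟨hxy, hw.1⟩ hwx.symm]
    exact left_mem_uIcc

lemma monotoneOn_or_antitoneOn_of_apply_mem_uIcc {α β : Type*} [LinearOrder α] [LinearOrder β]
    {f : α → β} {s : Set α}
    (h : ∀ x ∈ s, ∀ y ∈ s, ∀ z ∈ s, x ≤ y → y ≤ z → f y ∈ uIcc (f x) (f z)) :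
    MonotoneOn f s ∨ AntitoneOn f s := by
  by_contra hnot
  obtain ⟨x, hx, y, hy, z, hz, hxy, hyz, hpeak_or_valley⟩ :=
    not_monotoneOn_not_antitoneOn_iff_exists_le_le.mp (not_or.mp hnot)
  have hbetween := mem_uIcc.mp (h x hx y hy z hz hxy hyz)
  rcases hpeak_or_valley with ⟨_, _⟩ | ⟨_, _⟩ <;> rcases hbetween with ⟨_, _⟩ | ⟨_, _⟩ <;> order

def IsGradientFlowOn (φ u : ℝ → ℝ) (D : Set ℝ) : Prop :=
  ∀ t ∈ D, HasDerivAt u (-deriv φ (u t)) t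

namespace IsGradientFlowOn

variable {φ u : ℝ → ℝ} {D : Set ℝ}

lemma continuousOn (hu : IsGradientFlowOn φ u D) : ContinuousOn u D :=
  fun t ht => (hu t ht).continuousAt.continuousWithinAt

lemma hasDerivAt_comp (hφ : Differentiable ℝ φ) (hu : IsGradientFlowOn φ u D) {t : ℝ}
    (ht : t ∈ D) : HasDerivAt (φ ∘ u) (-deriv φ (u t) ^ 2) t :=
  ((hφ (u t)).hasDerivAt.comp t (hu t ht)).congr_deriv (by ring)

lemma antitoneOn_comp (hφ : Differentiable ℝ φ) (hu : IsGradientFlowOn φ u D)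
    (hD : Convex ℝ D) : AntitoneOn (φ ∘ u) D :=
  antitoneOn_of_hasDerivWithinAt_nonpos hD (hφ.continuous.comp_continuousOn hu.continuousOn)
    (fun _ ht => (hu.hasDerivAt_comp hφ (interior_subset ht)).hasDerivWithinAt)
    (fun _ _ => neg_nonpos.mpr (sq_nonneg _))

lemma apply_eq_of_apply_eq (hφ : Differentiable ℝ φ) (hu : IsGradientFlowOn φ u D)
    (hD : D.OrdConnected) {a c : ℝ} (ha : a ∈ D) (hc : c ∈ D) {b : ℝ} (hb : b ∈ Icc a c)
    (hac : u a = u c) : u b = u a := by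
  have hsub : Icc a c ⊆ D := hD.out ha hc
  have henergy : ∀ t ∈ Icc a c, φ (u t) = φ (u a) := fun t ht =>
    le_antisymm (hu.antitoneOn_comp hφ hD.convex ha (hsub ht) ht.1)
      (hac ▸ hu.antitoneOn_comp hφ hD.convex (hsub ht) hc ht.2)
  rcases hb.1.eq_or_lt with rfl | hab
  · rfl
  obtain ⟨ξ, hξ, hslope⟩ := exists_hasDerivAt_eq_slope u (fun t => -deriv φ (u t)) hab
    (hu.continuousOn.mono (hD.out ha (hsub hb)))
    (fun t ht => hu t (hsub ⟨ht.1.le, ht.2.le.trans hb.2⟩))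
  have hξ' : ξ ∈ Icc a c := ⟨hξ.1.le, hξ.2.le.trans hb.2⟩
  have hstationary : deriv φ (u ξ) = 0 := by
    have hconst : HasDerivAt (φ ∘ u) 0 ξ :=
      (hasDerivAt_const ξ (φ (u a))).congr_of_eventuallyEq <|
        eventually_of_mem (Icc_mem_nhds hξ.1 (hξ.2.trans_le hb.2)) henergy
    simpa using (hu.hasDerivAt_comp hφ (hsub hξ')).unique hconst
  rw [hstationary, neg_zero, eq_comm, div_eq_zero_iff, sub_eq_zero, sub_eq_zero] at hslope
  exact hslope.resolve_right hab.ne'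

end IsGradientFlowOn

theorem one_dimensional_gradient_flow_monotone
    (φ : ℝ → ℝ) (hφ : ContDiff ℝ 1 φ)
    (u : ℝ → ℝ)
    (hu : ∀ t ≥ (0:ℝ), HasDerivAt u (-(deriv φ (u t))) t) :
    MonotoneOn u (Ici 0) ∨ AntitoneOn u (Ici 0) := by
  have hflow : IsGradientFlowOn φ u (Ici 0) := hu
  have hφ' : Differentiable ℝ φ := hφ.differentiable one_ne_zero
  exact monotoneOn_or_antitoneOn_of_apply_mem_uIcc fun x hx _ _ z hz hxy hyz =>
    hflow.continuousOn.apply_mem_uIcc_of_eq_imp_eq ordConnected_Ici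
      (fun _ ha _ hc _ hb hac => hflow.apply_eq_of_apply_eq hφ' ordConnected_Ici ha hc hb hac)
      hx hz hxy hyz
end

section
/- Let H be a Hilbert space, φ ∈ C¹(H), and let u, v be C¹ solutions of the gradient flow w'(t) = -∇φ(w(t)) with u(t) = v(z(t)) for all t ≥ 0, where z : [0,∞) → [0,∞) is increasing and 1-Lipschitz with z(0) = 0. If ℒ¹({t ∈ [0,T) : ∇φ(u(t)) = 0}) = 0 for some T ∈ (0,∞], then z(t) = t for all t ∈ [0,T), and hence u = v on [0,T). -/
/-!
Where `u = v ∘ z` and both solve the gradient flow, the chain rule gives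
`-∇φ(u t) = z'(t) • (-∇φ(u t))`, so `z' = 1` wherever `z` is differentiable and `∇φ(u t) ≠ 0`,
i.e. almost everywhere on `[0, T)`. Being Lipschitz, `z` is absolutely continuous, hence
`z t = z 0 + ∫₀ᵗ z' = t`.
-/

open Set MeasureTheory Filter Topology
open scoped ENNReal Interval

theorem deriv_eq_one_of_eventuallyEq_comp {E : Type*} [NormedAddCommGroup E] [NormedSpace ℝ E]
    {u v : ℝ → E} {z : ℝ → ℝ} {s : ℝ} {w : E} (hw : w ≠ 0)
    (hu : HasDerivAt u w s) (hv : HasDerivAt v w (z s)) (hz : DifferentiableAt ℝ z s)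
    (huv : u =ᶠ[𝓝 s] v ∘ z) : deriv z s = 1 :=
  have hcomp : HasDerivAt u (deriv z s • w) s :=
    (hv.scomp s hz.hasDerivAt).congr_of_eventuallyEq huv
  smul_left_injective ℝ hw (by simpa using hcomp.unique hu)

theorem AbsolutelyContinuousOnInterval.sub_eq_of_ae_deriv_eq {f : ℝ → ℝ} {a b c : ℝ}
    (hf : AbsolutelyContinuousOnInterval f a b) (h : ∀ᵐ x, x ∈ Ι a b → deriv f x = c) :
    f b - f a = (b - a) * c := by
  rw [← hf.integral_deriv_eq_sub, intervalIntegral.integral_congr_ae h,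
    intervalIntegral.integral_const, smul_eq_mul]

theorem reparametrization_identity_on_noncritical_general
    {H : Type*} [NormedAddCommGroup H] [InnerProductSpace ℝ H] [CompleteSpace H]
    (φ : H → ℝ)
    (u v : ℝ → H) (z : ℝ → ℝ)
    (hu : ∀ t ≥ (0:ℝ), HasDerivAt u (-gradient φ (u t)) t)
    (hv : ∀ t ≥ (0:ℝ), HasDerivAt v (-gradient φ (v t)) t)
    (hz0 : z 0 = 0) (hzmono : Monotone z) (hzlip : LipschitzWith 1 z)
    (huv : ∀ t ≥ (0:ℝ), u t = v (z t))
    (T : ℝ≥0∞)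
    (hmeas : volume {t : ℝ | 0 ≤ t ∧ ENNReal.ofReal t < T ∧ gradient φ (u t) = 0} = 0) :
    ∀ t : ℝ, 0 ≤ t → ENNReal.ofReal t < T → z t = t ∧ u t = v t := by
  intro t ht htT
  have hderiv : ∀ᵐ x, x ∈ Ι 0 t → deriv z x = 1 := by
    filter_upwards [hzlip.ae_differentiableAt, measure_eq_zero_iff_ae_notMem.1 hmeas]
      with x hdiff hcrit hx
    rw [uIoc_of_le ht] at hx
    have hxT : ENNReal.ofReal x < T := (ENNReal.ofReal_le_ofReal hx.2).trans_lt htT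
    have hgrad : -gradient φ (u x) ≠ 0 := neg_ne_zero.2 fun h ↦ hcrit ⟨hx.1.le, hxT, h⟩
    have hzx : 0 ≤ z x := hz0 ▸ hzmono hx.1.le
    refine deriv_eq_one_of_eventuallyEq_comp (v := v) hgrad (hu x hx.1.le) ?_ hdiff ?_
    · simpa only [huv x hx.1.le] using hv (z x) hzx
    · filter_upwards [Ioi_mem_nhds hx.1] with y hy using huv y hy.le
  have hzt : z t = t := by
    simpa [hz0] using
      hzlip.lipschitzOnWith.absolutelyContinuousOnInterval.sub_eq_of_ae_deriv_eq hderiv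
  exact ⟨hzt, by rw [huv t ht, hzt]⟩

theorem reparametrization_identity_on_noncritical
    {H : Type*} [NormedAddCommGroup H] [InnerProductSpace ℝ H] [CompleteSpace H]
    (φ : H → ℝ) (hφ : ContDiff ℝ 1 φ)
    (u v : ℝ → H) (z : ℝ → ℝ)
    (hu : ∀ t ≥ (0:ℝ), HasDerivAt u (-gradient φ (u t)) t)
    (hv : ∀ t ≥ (0:ℝ), HasDerivAt v (-gradient φ (v t)) t)
    (hz0 : z 0 = 0) (hzmono : Monotone z) (hzlip : LipschitzWith 1 z)
    (huv : ∀ t ≥ (0:ℝ), u t = v (z t))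
    (T : ℝ≥0∞) (hT : 0 < T)
    (hmeas : volume {t : ℝ | 0 ≤ t ∧ ENNReal.ofReal t < T ∧ gradient φ (u t) = 0} = 0) :
    ∀ t : ℝ, 0 ≤ t → ENNReal.ofReal t < T → z t = t ∧ u t = v t :=
  reparametrization_identity_on_noncritical_general φ u v z hu hv hz0 hzmono hzlip huv T hmeas
end

section
/- Let H be a Hilbert space, φ ∈ C¹(H), and u, v C¹ solutions of the gradient flow with u(t) = v(z₁(t)) and v(t) = u(z₂(t)) for increasing 1-Lipschitz maps z₁, z₂ : [0,∞) → [0,∞) with zᵢ(0)=0, range v ⊆ closure(range u) and range u ⊆ closure(range v). Then u(t) = v(t) for all t ≥ 0 (the partial order ≻ on solutions is antisymmetric). -/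
/-!
Along a gradient flow the energy `φ ∘ u` is antitone, with derivative `-‖∇φ(u)‖²`. If `u(t) = u(s)`
for some `s ≤ t`, the energy is therefore constant on `[s, t]`, the gradient vanishes there, and `u`
is constant on `[s, t]`. With `s = z₂ (z₁ t)` we get `u(s) = v(z₁ t) = u(t)`, and `z₂ t ∈ [s, t]`
because the `zᵢ` are monotone and 1-Lipschitz with `zᵢ 0 = 0`; hence `v t = u (z₂ t) = u t`.
-/

open Set Filter Topology

theorem LipschitzWith.le_self_of_map_zero {w : ℝ → ℝ} (hw : LipschitzWith 1 w) (hw0 : w 0 = 0)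
    {t : ℝ} (ht : 0 ≤ t) : w t ≤ t := by
  have := hw.dist_le_mul t 0
  rw [Real.dist_eq, Real.dist_eq, hw0, sub_zero, sub_zero, NNReal.coe_one, one_mul,
    abs_of_nonneg ht] at this
  exact (le_abs_self _).trans this

theorem HasDerivAt.eq_zero_of_eventuallyEq_const_nhdsGE {f : ℝ → ℝ} {f' x c : ℝ}
    (hf : HasDerivAt f f' x) (hc : f =ᶠ[𝓝[≥] x] fun _ => c) : f' = 0 :=
  (uniqueDiffOn_Ici x x self_mem_Ici).eq_deriv _ hf.hasDerivWithinAt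
    ((hasDerivWithinAt_const x _ c).congr_of_eventuallyEq hc (hc.eq_of_nhdsWithin self_mem_Ici))

section GradientFlow

variable {H : Type*} [NormedAddCommGroup H] [InnerProductSpace ℝ H] [CompleteSpace H]

def IsGradientFlow (φ : H → ℝ) (u : ℝ → H) : Prop :=
  ∀ t ≥ (0 : ℝ), HasDerivAt u (-gradient φ (u t)) t

namespace IsGradientFlow

variable {φ : H → ℝ} {u : ℝ → H} {s t : ℝ}

theorem hasDerivAt_comp (hu : IsGradientFlow φ u) (hφ : Differentiable ℝ φ) (ht : 0 ≤ t) :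
    HasDerivAt (φ ∘ u) (-‖gradient φ (u t)‖ ^ 2) t := by
  have h := (hφ (u t)).hasGradientAt.hasFDerivAt.comp_hasDerivAt t (hu t ht)
  rwa [InnerProductSpace.toDual_apply_apply, inner_neg_right, real_inner_self_eq_norm_sq] at h

theorem antitoneOn_comp (hu : IsGradientFlow φ u) (hφ : Differentiable ℝ φ) :
    AntitoneOn (φ ∘ u) (Ici 0) :=
  antitoneOn_of_hasDerivWithinAt_nonpos (convex_Ici 0)
    (fun _ hr => (hu.hasDerivAt_comp hφ hr).continuousAt.continuousWithinAt)
    (fun _ hr => (hu.hasDerivAt_comp hφ (interior_subset hr)).hasDerivWithinAt)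
    fun _ _ => neg_nonpos.mpr (sq_nonneg _)

theorem gradient_eq_zero_of_comp_eq (hu : IsGradientFlow φ u) (hφ : Differentiable ℝ φ)
    (hs : 0 ≤ s) (hst : φ (u s) = φ (u t)) : ∀ x ∈ Ico s t, gradient φ (u x) = 0 := by
  have hanti := hu.antitoneOn_comp hφ
  have hconst : ∀ r ∈ Icc s t, φ (u r) = φ (u t) := fun r hr =>
    le_antisymm (hst ▸ hanti hs (hs.trans hr.1) hr.1)
      (hanti (hs.trans hr.1) (hs.trans (hr.1.trans hr.2)) hr.2)
  intro x hx
  have hright : φ ∘ u =ᶠ[𝓝[≥] x] fun _ => φ (u t) := by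
    filter_upwards [Icc_mem_nhdsGE hx.2] with r hr
    exact hconst r ⟨hx.1.trans hr.1, hr.2⟩
  simpa using (hu.hasDerivAt_comp hφ (hs.trans hx.1)).eq_zero_of_eventuallyEq_const_nhdsGE hright

theorem eq_of_mem_Icc_of_comp_eq (hu : IsGradientFlow φ u) (hφ : Differentiable ℝ φ)
    (hs : 0 ≤ s) (hst : φ (u s) = φ (u t)) : ∀ r ∈ Icc s t, u r = u s := by
  refine constant_of_has_deriv_right_zero
    (fun r hr => (hu r (hs.trans hr.1)).continuousAt.continuousWithinAt) fun x hx => ?_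
  simpa [hu.gradient_eq_zero_of_comp_eq hφ hs hst x hx] using
    (hu x (hs.trans hx.1)).hasDerivWithinAt (s := Ici x)

end IsGradientFlow

end GradientFlow

theorem gradient_flow_order_antisymmetric_general
    {H : Type*} [NormedAddCommGroup H] [InnerProductSpace ℝ H] [CompleteSpace H]
    (φ : H → ℝ) (hφ : ContDiff ℝ 1 φ)
    (u v : ℝ → H) (z₁ z₂ : ℝ → ℝ)
    (hu : ∀ t ≥ (0:ℝ), HasDerivAt u (-gradient φ (u t)) t)
    (hz₁mono : Monotone z₁) (hz₁lip : LipschitzWith 1 z₁) (hz₁0 : z₁ 0 = 0)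
    (hz₂mono : Monotone z₂) (hz₂lip : LipschitzWith 1 z₂) (hz₂0 : z₂ 0 = 0)
    (huv : ∀ t ≥ (0:ℝ), u t = v (z₁ t))
    (hvu : ∀ t ≥ (0:ℝ), v t = u (z₂ t)) :
    ∀ t ≥ (0:ℝ), u t = v t := by
  intro t ht
  have hz₁t : 0 ≤ z₁ t := hz₁0 ▸ hz₁mono ht
  have hs : 0 ≤ z₂ (z₁ t) := hz₂0 ▸ hz₂mono hz₁t
  have hreturn : u (z₂ (z₁ t)) = u t := by rw [huv t ht, hvu _ hz₁t]
  have hmem : z₂ t ∈ Icc (z₂ (z₁ t)) t :=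
    ⟨hz₂mono (hz₁lip.le_self_of_map_zero hz₁0 ht), hz₂lip.le_self_of_map_zero hz₂0 ht⟩
  have hstationary := IsGradientFlow.eq_of_mem_Icc_of_comp_eq hu (hφ.differentiable one_ne_zero)
    hs (congrArg φ hreturn)
  rw [hvu t ht, hstationary _ hmem, hreturn]

theorem gradient_flow_order_antisymmetric
    {H : Type*} [NormedAddCommGroup H] [InnerProductSpace ℝ H] [CompleteSpace H]
    (φ : H → ℝ) (hφ : ContDiff ℝ 1 φ)
    (u v : ℝ → H) (z₁ z₂ : ℝ → ℝ)
    (hu : ∀ t ≥ (0:ℝ), HasDerivAt u (-gradient φ (u t)) t)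
    (hv : ∀ t ≥ (0:ℝ), HasDerivAt v (-gradient φ (v t)) t)
    (hz₁mono : Monotone z₁) (hz₁lip : LipschitzWith 1 z₁) (hz₁0 : z₁ 0 = 0)
    (hz₂mono : Monotone z₂) (hz₂lip : LipschitzWith 1 z₂) (hz₂0 : z₂ 0 = 0)
    (huv : ∀ t ≥ (0:ℝ), u t = v (z₁ t))
    (hvu : ∀ t ≥ (0:ℝ), v t = u (z₂ t))
    (hr1 : v '' Ici 0 ⊆ closure (u '' Ici 0))
    (hr2 : u '' Ici 0 ⊆ closure (v '' Ici 0)) :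
    ∀ t ≥ (0:ℝ), u t = v t :=
  gradient_flow_order_antisymmetric_general φ hφ u v z₁ z₂ hu hz₁mono hz₁lip hz₁0 hz₂mono hz₂lip
    hz₂0 huv hvu
end

section
/- Let H be a Hilbert space, φ ∈ C¹(H), τ > 0, and let x, y, z ∈ H and λ, δ, ω ≥ 0 satisfy: |(z-x)/τ + ∇φ(z)| ≤ δ, |∇φ(w) - ∇φ(y)| ≤ ω for all w on the segment [y,z] and w = z, and suppose y is a minimizer of w ↦ φ(w) + (1/(2τ))|w-x|² + λ·ψ(w) for a nonnegative 1-Lipschitz function ψ with ψ(z) = 0 ≤ ψ(y) and the first-order condition ξ := (y-x)/τ + ∇φ(y) satisfies λ ≤ |ξ| ≤ λ + δ'. Then (τ/2)|ξ|² ≤ (1/(2τ))|τ∇φ(y) - (x - z)|² + 2|z - y|·ω, and hence λ² ≤ 2(ω² + δ²) + (4/τ)|z-y|·ω. -/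
/-!
Write `ξ = τ⁻¹ • (y - x) + ∇φ y`. Expanding squares, `(τ/2)‖ξ‖²` equals
`‖τ ∇φ(y) - (x - z)‖² / (2τ)` plus `(‖y - x‖² - ‖z - x‖²) / (2τ) - ⟪∇φ(y), z - y⟫`. Minimality of `y`
bounds the difference of squares by `φ z - φ y`, and the mean value inequality bounds
`φ z - φ y - ⟪∇φ(y), z - y⟫` by `ω ‖z - y‖`. For the bound on `λ`, the vector `τ ∇φ(y) - (x - z)` is
`τ` times the residual at `z` plus `τ (∇φ(y) - ∇φ(z))`, so it has norm at most `τ (δ + ω)`.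
-/

open InnerProductSpace

section

variable {H : Type*} [NormedAddCommGroup H] [InnerProductSpace ℝ H]

theorem abs_sub_sub_inner_gradient_le [CompleteSpace H] {f : H → ℝ} {y z : H} {C : ℝ}
    (hf : ∀ w ∈ segment ℝ y z, DifferentiableAt ℝ f w)
    (hC : ∀ w ∈ segment ℝ y z, ‖gradient f w - gradient f y‖ ≤ C) :
    |f z - f y - ⟪gradient f y, z - y⟫_ℝ| ≤ C * ‖z - y‖ := by
  have hfderiv : ∀ w, fderiv ℝ f w = toDual ℝ H (gradient f w) := fun w =>
    ((toDual ℝ H).apply_symm_apply _).symm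
  have bound : ∀ w ∈ segment ℝ y z, ‖fderiv ℝ f w - toDual ℝ H (gradient f y)‖ ≤ C := by
    intro w hw
    rw [hfderiv, ← map_sub, LinearIsometryEquiv.norm_map]
    exact hC w hw
  simpa [Real.norm_eq_abs] using (convex_segment y z).norm_image_sub_le_of_norm_fderiv_le' hf
    bound (left_mem_segment ℝ y z) (right_mem_segment ℝ y z)

theorem norm_add_sq_sub_norm_add_sq (a b v : H) :
    ‖a + v‖ ^ 2 - ‖b + v‖ ^ 2 = ‖a‖ ^ 2 - ‖b‖ ^ 2 + 2 * ⟪a - b, v⟫_ℝ := by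
  rw [norm_add_sq_real, norm_add_sq_real, inner_sub_left]
  ring

theorem inv_smul_add_eq_inv_smul {τ : ℝ} (hτ : τ ≠ 0) (a v : H) :
    τ⁻¹ • a + v = τ⁻¹ • (a + τ • v) := by
  rw [smul_add, inv_smul_smul₀ hτ]

theorem half_mul_norm_inv_smul_add_sq_le {x y z g : H} {τ c : ℝ} (hτ : 0 < τ)
    (h : 1 / (2 * τ) * ‖y - x‖ ^ 2 ≤ 1 / (2 * τ) * ‖z - x‖ ^ 2 + ⟪g, z - y⟫_ℝ + c) :
    τ / 2 * ‖τ⁻¹ • (y - x) + g‖ ^ 2 ≤ 1 / (2 * τ) * ‖τ • g - (x - z)‖ ^ 2 + c := by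
  have hξ : τ / 2 * ‖τ⁻¹ • (y - x) + g‖ ^ 2 = 1 / (2 * τ) * ‖(y - x) + τ • g‖ ^ 2 := by
    rw [inv_smul_add_eq_inv_smul hτ.ne', norm_smul, mul_pow, Real.norm_eq_abs,
      abs_of_pos (inv_pos.mpr hτ)]
    field_simp
  have hdiff := norm_add_sq_sub_norm_add_sq (y - x) (z - x) (τ • g)
  rw [sub_sub_sub_cancel_right, real_inner_smul_right, ← neg_sub z y, inner_neg_left,
    real_inner_comm] at hdiff
  rw [hξ, show τ • g - (x - z) = (z - x) + τ • g by abel]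
  have : 1 / (2 * τ) * (‖y - x + τ • g‖ ^ 2 - ‖z - x + τ • g‖ ^ 2) ≤ c := by
    have hinner : 1 / (2 * τ) * (2 * (τ * -⟪g, z - y⟫_ℝ)) = -⟪g, z - y⟫_ℝ := by
      field_simp
    rw [hdiff, mul_add, mul_sub, hinner]
    linarith
  linarith

theorem norm_smul_sub_le {x z u v : H} {τ : ℝ} (hτ : 0 < τ) :
    ‖τ • v - (x - z)‖ ≤ τ * (‖τ⁻¹ • (z - x) + u‖ + ‖v - u‖) := by
  have h : τ • v - (x - z) = τ • ((τ⁻¹ • (z - x) + u) + (v - u)) := by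
    rw [smul_add, smul_add, smul_inv_smul₀ hτ.ne', smul_sub]
    abel
  rw [h, norm_smul, Real.norm_eq_abs, abs_of_pos hτ]
  exact mul_le_mul_of_nonneg_left (norm_add_le _ _) hτ.le

end

theorem penalized_scheme_central_estimate_general
    {H : Type*} [NormedAddCommGroup H] [InnerProductSpace ℝ H] [CompleteSpace H]
    (φ : H → ℝ) (hφ : ContDiff ℝ 1 φ)
    (τ lam δ ω : ℝ) (hτ : 0 < τ) (hlam : 0 ≤ lam)
    (x y z : H) (ψ : H → ℝ)
    (hψnn : ∀ w : H, 0 ≤ ψ w)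
    (hδz : ‖τ⁻¹ • (z - x) + gradient φ z‖ ≤ δ)
    (hseg : ∀ w ∈ segment ℝ y z, ‖gradient φ w - gradient φ y‖ ≤ ω)
    (hmin : φ y + 1 / (2 * τ) * ‖y - x‖ ^ 2 + lam * ψ y ≤ φ z + 1 / (2 * τ) * ‖z - x‖ ^ 2)
    (hξ : lam ≤ ‖τ⁻¹ • (y - x) + gradient φ y‖) :
    (τ / 2) * ‖τ⁻¹ • (y - x) + gradient φ y‖ ^ 2 ≤
        1 / (2 * τ) * ‖τ • gradient φ y - (x - z)‖ ^ 2 + 2 * ‖z - y‖ * ω ∧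
      lam ^ 2 ≤ 2 * (ω ^ 2 + δ ^ 2) + (4 / τ) * ‖z - y‖ * ω := by
  have hω : 0 ≤ ω := by simpa using hseg y (left_mem_segment ℝ y z)
  have hmvt := abs_sub_sub_inner_gradient_le
    (fun w _ => (hφ.differentiable one_ne_zero).differentiableAt) hseg
  have hstep : τ / 2 * ‖τ⁻¹ • (y - x) + gradient φ y‖ ^ 2 ≤
      1 / (2 * τ) * ‖τ • gradient φ y - (x - z)‖ ^ 2 + 2 * ‖z - y‖ * ω :=
    half_mul_norm_inv_smul_add_sq_le hτ <| by
      linarith [mul_nonneg hlam (hψnn y), (abs_le.mp hmvt).2,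
        mul_nonneg hω (norm_nonneg (z - y))]
  refine ⟨hstep, ?_⟩
  have hfar : ‖τ • gradient φ y - (x - z)‖ ≤ τ * (δ + ω) := by
    refine (norm_smul_sub_le hτ).trans (mul_le_mul_of_nonneg_left (add_le_add hδz ?_) hτ.le)
    rw [norm_sub_rev]
    exact hseg z (right_mem_segment ℝ y z)
  have hlam_sq : τ / 2 * lam ^ 2 ≤ τ / 2 * (δ + ω) ^ 2 + 2 * ‖z - y‖ * ω :=
    calc τ / 2 * lam ^ 2 ≤ τ / 2 * ‖τ⁻¹ • (y - x) + gradient φ y‖ ^ 2 := by gcongr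
      _ ≤ 1 / (2 * τ) * (τ * (δ + ω)) ^ 2 + 2 * ‖z - y‖ * ω := hstep.trans (by gcongr)
      _ = τ / 2 * (δ + ω) ^ 2 + 2 * ‖z - y‖ * ω := by field_simp
  refine le_of_mul_le_mul_left (hlam_sq.trans ?_) (half_pos hτ)
  have hscale : τ / 2 * (4 / τ * ‖z - y‖ * ω) = 2 * ‖z - y‖ * ω := by
    field_simp
    ring
  nlinarith [mul_nonneg hτ.le (sq_nonneg (δ - ω))]

theorem penalized_scheme_central_estimate
    {H : Type*} [NormedAddCommGroup H] [InnerProductSpace ℝ H] [CompleteSpace H]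
    (φ : H → ℝ) (hφ : ContDiff ℝ 1 φ)
    (τ lam δ ω : ℝ) (hτ : 0 < τ) (hlam : 0 ≤ lam) (hδ : 0 ≤ δ) (hω : 0 ≤ ω)
    (x y z : H) (ψ : H → ℝ)
    (hψnn : ∀ w : H, 0 ≤ ψ w) (hψlip : LipschitzWith 1 ψ) (hψz : ψ z = 0)
    (hδz : ‖τ⁻¹ • (z - x) + gradient φ z‖ ≤ δ)
    (hseg : ∀ w ∈ segment ℝ y z, ‖gradient φ w - gradient φ y‖ ≤ ω)
    (hmin : φ y + 1 / (2 * τ) * ‖y - x‖ ^ 2 + lam * ψ y ≤ φ z + 1 / (2 * τ) * ‖z - x‖ ^ 2)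
    (hξ : lam ≤ ‖τ⁻¹ • (y - x) + gradient φ y‖) :
    (τ / 2) * ‖τ⁻¹ • (y - x) + gradient φ y‖ ^ 2 ≤
        1 / (2 * τ) * ‖τ • gradient φ y - (x - z)‖ ^ 2 + 2 * ‖z - y‖ * ω ∧
      lam ^ 2 ≤ 2 * (ω ^ 2 + δ ^ 2) + (4 / τ) * ‖z - y‖ * ω :=
  penalized_scheme_central_estimate_general φ hφ τ lam δ ω hτ hlam x y z ψ hψnn hδz hseg hmin hξ
end

section
/- Let H be a finite-dimensional Hilbert space, φ ∈ C¹(H), and suppose φ_τ : H → ℝ (τ > 0) satisfy lim_{τ↓0} Lip[φ_τ - φ] = 0. Suppose there exist a vanishing sequence τ(k) ↓ 0 and piecewise-constant discrete solutions U_{τ(k)} of the minimizing movement scheme with step τ(k) and energy φ_{τ(k)} starting from u₀ — i.e. U⁰ = u₀, Uⁿ ∈ argmin_V [ (1/(2τ))|V - U^{n-1}|² + φ_τ(V) ], U_τ(t) = Uⁿ on ((n-1)τ, nτ] — such that U_{τ(k)}(t) → u(t) for every t ∈ [0,T]. Then u ∈ C¹([0,T]; H) and u'(t) = -∇φ(u(t))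 on [0,T] with u(0) = u₀. -/
open Set Filter Topology MeasureTheory Interval InnerProductSpace

/-!
A minimizer of a function that is differentiable up to a Lipschitz perturbation has gradient
bounded by the Lipschitz constant; hence each minimizing-movement step solves the implicit Euler
equation `(Uⁿ - Uⁿ⁻¹) / τ + ∇φ(Uⁿ) = 0` up to an error `Lip[φ_τ - φ]`. The energy estimate keeps
the discrete solutions in a fixed ball up to time `T`, where `∇φ` is bounded. Summing the Euler
equations, the piecewise constant interpolant solves `u(t) = u₀ - ∫₀ᵗ ∇φ(u)` up to an error that
vanishes with `τ`; dominated convergence passes to the limit, and the fundamental theorem of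
calculus then yields the derivative.
-/

theorem HasFDerivAt.neg_le_of_forall_le_add {E : Type*} [NormedAddCommGroup E] [NormedSpace ℝ E]
    {f : E → ℝ} {f' : E →L[ℝ] ℝ} {x : E} {l : ℝ} (hf : HasFDerivAt f f' x)
    (h : ∀ y, f x ≤ f y + l * ‖y - x‖) (v : E) : -(l * ‖v‖) ≤ f' v := by
  have hray : HasDerivWithinAt (fun s : ℝ => f (x + s • v)) (f' v) (Ici 0) 0 := by
    have hline := ((hasDerivAt_id (0 : ℝ)).smul_const v).const_add x
    exact (hf.comp_hasDerivAt_of_eq 0 hline (by simp)).hasDerivWithinAt.congr_deriv (by simp)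
  by_contra! hlt
  obtain ⟨s, hslope, hs⟩ :=
    ((hray.liminf_right_slope_le hlt).and_eventually self_mem_nhdsWithin).exists
  have hs : (0 : ℝ) < s := hs
  have := h (x + s • v)
  rw [slope_def_field, zero_smul, add_zero, sub_zero, div_lt_iff₀ hs] at hslope
  rw [add_sub_cancel_left, norm_smul, Real.norm_of_nonneg hs.le] at this
  nlinarith

theorem HasFDerivAt.norm_le_of_forall_le_add {E : Type*} [NormedAddCommGroup E]
    [NormedSpace ℝ E] {f : E → ℝ} {f' : E →L[ℝ] ℝ} {x : E} {l : ℝ} (hf : HasFDerivAt f f' x)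
    (hl : 0 ≤ l) (h : ∀ y, f x ≤ f y + l * ‖y - x‖) : ‖f'‖ ≤ l := by
  refine f'.opNorm_le_bound hl fun v => abs_le.2 ⟨hf.neg_le_of_forall_le_add h v, ?_⟩
  simpa using hf.neg_le_of_forall_le_add h (-v)

theorem norm_sub_add_smul_gradient_le {H : Type*} [NormedAddCommGroup H]
    [InnerProductSpace ℝ H] [CompleteSpace H] {φ F : H → ℝ} {τ l : ℝ} {x y : H} (hτ : 0 < τ)
    (hl : 0 ≤ l) (hφ : DifferentiableAt ℝ φ y)
    (hF : ∀ z, (F z - φ z) - (F y - φ y) ≤ l * ‖z - y‖)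
    (hy : ∀ z, 1 / (2 * τ) * ‖y - x‖ ^ 2 + F y ≤ 1 / (2 * τ) * ‖z - x‖ ^ 2 + F z) :
    ‖y - x + τ • gradient φ y‖ ≤ τ * l := by
  set p := τ⁻¹ • (y - x) + gradient φ y with hp_def
  have hG : HasFDerivAt (fun z => 1 / (2 * τ) * ‖z - x‖ ^ 2 + φ z) (toDual ℝ H p) y := by
    refine ((((hasFDerivAt_id y).sub_const x).norm_sq.const_mul (1 / (2 * τ))).add
      (hasGradientAt_iff_hasFDerivAt.1 hφ.hasGradientAt)).congr_fderiv ?_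
    ext v
    simp only [one_div, mul_inv_rev, id_eq, map_sub, ContinuousLinearMap.comp_id,
      toDual_gradient, add_apply, smul_apply, sub_apply, coe_innerSL_apply, nsmul_eq_mul,
      Nat.cast_ofNat, smul_eq_mul, map_add, map_smul, toDual_apply_apply, add_left_inj, p]
    field_simp
  have hp : ‖p‖ ≤ l := by
    simpa using hG.norm_le_of_forall_le_add hl fun z => by linarith [hy z, hF z]
  have hτp : y - x + τ • gradient φ y = τ • p := by
    rw [hp_def, smul_add, smul_smul, mul_inv_cancel₀ hτ.ne', one_smul]
  rw [hτp, norm_smul, Real.norm_of_nonneg hτ.le]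
  gcongr

def IsMinimizingMovement {E : Type*} [NormedAddCommGroup E] (τ : ℝ) (F : E → ℝ) (U : ℕ → E) :
    Prop :=
  ∀ n V, 1 / (2 * τ) * ‖U (n + 1) - U n‖ ^ 2 + F (U (n + 1)) ≤
    1 / (2 * τ) * ‖V - U n‖ ^ 2 + F V

namespace IsMinimizingMovement

variable {E : Type*} [NormedAddCommGroup E] {τ : ℝ} {F : E → ℝ} {U : ℕ → E}

theorem norm_sub_sq_le (h : IsMinimizingMovement τ F U) (hτ : 0 < τ) (n : ℕ) :
    ‖U (n + 1) - U n‖ ^ 2 ≤ 2 * τ * (F (U n) - F (U (n + 1))) := by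
  have := h n (U n)
  rw [sub_self, norm_zero] at this
  field_simp at this
  linarith

theorem antitone (h : IsMinimizingMovement τ F U) (hτ : 0 < τ) : Antitone (F ∘ U) :=
  antitone_nat_of_succ_le fun n => show F (U (n + 1)) ≤ F (U n) by
    nlinarith [h.norm_sub_sq_le hτ n, sq_nonneg ‖U (n + 1) - U n‖]

theorem sum_norm_sub_sq_le (h : IsMinimizingMovement τ F U) (hτ : 0 < τ) (n : ℕ) :
    ∑ i ∈ Finset.range n, ‖U (i + 1) - U i‖ ^ 2 ≤ 2 * τ * (F (U 0) - F (U n)) := by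
  induction n with
  | zero => simp
  | succ n ih => rw [Finset.sum_range_succ]; linarith [h.norm_sub_sq_le hτ n]

theorem norm_sub_initial_sq_le (h : IsMinimizingMovement τ F U) (hτ : 0 < τ) (n : ℕ) :
    ‖U n - U 0‖ ^ 2 ≤ 2 * (n * τ) * (F (U 0) - F (U n)) :=
  calc ‖U n - U 0‖ ^ 2 ≤ (∑ i ∈ Finset.range n, ‖U (i + 1) - U i‖) ^ 2 := by
        rw [← Finset.sum_range_sub]
        gcongr
        exact norm_sum_le _ _
    _ ≤ n * ∑ i ∈ Finset.range n, ‖U (i + 1) - U i‖ ^ 2 := by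
        simpa using sq_sum_le_card_mul_sum_sq (s := Finset.range n) (f := fun i => ‖U (i + 1) - U i‖)
    _ ≤ n * (2 * τ * (F (U 0) - F (U n))) := by gcongr; exact h.sum_norm_sub_sq_le hτ n
    _ = 2 * (n * τ) * (F (U 0) - F (U n)) := by ring

end IsMinimizingMovement

theorem exists_norm_sub_le_of_isMinimizingMovement {E : Type*} [NormedAddCommGroup E]
    {φ : E → ℝ} (hφ : Continuous φ) {τ ℓ : ℕ → ℝ} {F : ℕ → E → ℝ} {U : ℕ → ℕ → E}
    {N : ℕ → ℕ} {L c : ℝ} {x₀ x : E} (hτ : ∀ k, 0 < τ k)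
    (hU : ∀ k, IsMinimizingMovement (τ k) (F k) (U k)) (hU0 : ∀ k, U k 0 = x₀)
    (hF : ∀ k y, (F k x₀ - φ x₀) - (F k y - φ y) ≤ ℓ k * ‖x₀ - y‖)
    (hℓ : Tendsto ℓ atTop (𝓝 L)) (hN : ∀ k, N k * τ k ≤ c)
    (hlim : Tendsto (fun k => U k (N k)) atTop (𝓝 x)) :
    ∃ B, ∀ k, ∀ n ≤ N k, ‖U k n - x₀‖ ≤ B := by
  obtain ⟨C, hC⟩ := ((tendsto_const_nhds.sub ((hφ.tendsto x).comp hlim)).add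
    (hℓ.mul (tendsto_const_nhds.sub hlim).norm)).bddAbove_range
  refine ⟨√(2 * c * C), fun k n hn => Real.le_sqrt_of_sq_le ?_⟩
  have hanti := (hU k).antitone (hτ k)
  have hgap₀ : 0 ≤ F k x₀ - F k (U k n) := by
    have : F k (U k n) ≤ F k (U k 0) := hanti (Nat.zero_le n)
    rw [hU0] at this
    linarith
  -- the energy gap is largest at the final index, where it is controlled by a convergent sequence
  have hgap : F k x₀ - F k (U k n) ≤ C := by
    have hmono : F k (U k (N k)) ≤ F k (U k n) := hanti hn
    have hfinal : φ x₀ - φ (U k (N k)) + ℓ k * ‖x₀ - U k (N k)‖ ≤ C := hC ⟨k, rfl⟩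
    linarith [hF k (U k (N k))]
  have hnτ : n * τ k ≤ c := le_trans (by gcongr; exact (hτ k).le) (hN k)
  calc ‖U k n - x₀‖ ^ 2 ≤ 2 * (n * τ k) * (F k x₀ - F k (U k n)) := by
        simpa [hU0] using (hU k).norm_sub_initial_sq_le (hτ k) n
    _ ≤ 2 * c * C := by
        have : 0 ≤ (n : ℝ) * τ k := mul_nonneg n.cast_nonneg (hτ k).le
        exact mul_le_mul (by linarith) hgap hgap₀ (by linarith)

section StepFunction

variable {τ : ℝ}

theorem Nat.ceil_div_eq_of_mem_Ioc (hτ : 0 < τ) {i : ℕ} {r : ℝ}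
    (hr : r ∈ Ioc (i * τ) ((i + 1) * τ)) : ⌈r / τ⌉₊ = i + 1 := by
  rw [Nat.ceil_eq_iff i.succ_ne_zero, lt_div_iff₀ hτ, div_le_iff₀ hτ]
  push_cast
  exact ⟨by simpa using hr.1, hr.2⟩

theorem le_ceil_div_mul (hτ : 0 < τ) (t : ℝ) : t ≤ ⌈t / τ⌉₊ * τ :=
  (div_le_iff₀ hτ).1 (Nat.le_ceil _)

theorem ceil_div_mul_le (hτ : 0 < τ) {t : ℝ} (ht : 0 ≤ t) : ⌈t / τ⌉₊ * τ ≤ t + τ := by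
  have := Nat.ceil_lt_add_one (div_nonneg ht hτ.le)
  calc (⌈t / τ⌉₊ : ℝ) * τ ≤ (t / τ + 1) * τ := by gcongr
    _ = t + τ := by field_simp

variable {E : Type*} [NormedAddCommGroup E] (G : ℕ → E)

theorem intervalIntegrable_comp_ceil_div_step (hτ : 0 < τ) (i : ℕ) :
    IntervalIntegrable (fun r => G ⌈r / τ⌉₊) volume (i * τ) ((i + 1 : ℕ) * τ) := by
  rw [intervalIntegrable_iff_integrableOn_Ioc_of_le (by gcongr; simp)]
  refine (integrableOn_const (C := G (i + 1)) measure_Ioc_lt_top.ne).congr_fun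
    (fun r hr => ?_) measurableSet_Ioc
  rw [Nat.ceil_div_eq_of_mem_Ioc hτ (by exact_mod_cast hr)]

theorem intervalIntegrable_comp_ceil_div (hτ : 0 < τ) (n : ℕ) :
    IntervalIntegrable (fun r => G ⌈r / τ⌉₊) volume 0 (n * τ) := by
  simpa using IntervalIntegrable.trans_iterate (a := fun i : ℕ => i * τ)
    fun i _ => intervalIntegrable_comp_ceil_div_step G hτ i

theorem aestronglyMeasurable_comp_ceil_div (μ : Measure ℝ) :
    AEStronglyMeasurable (fun r => G ⌈r / τ⌉₊) μ :=
  (StronglyMeasurable.of_discrete.comp_measurable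
    (Nat.measurable_ceil.comp (measurable_id.div_const _))).aestronglyMeasurable

variable [NormedSpace ℝ E] [CompleteSpace E]

theorem integral_comp_ceil_div_step (hτ : 0 < τ) (i : ℕ) :
    ∫ r in i * τ..(i + 1 : ℕ) * τ, G ⌈r / τ⌉₊ = τ • G (i + 1) := by
  rw [intervalIntegral.integral_of_le (by gcongr; simp),
    setIntegral_congr_fun measurableSet_Ioc
      (fun r hr => by rw [Nat.ceil_div_eq_of_mem_Ioc hτ (by exact_mod_cast hr)]),
    setIntegral_const, Real.volume_real_Ioc_of_le (by gcongr; simp)]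
  push_cast
  ring_nf

theorem integral_comp_ceil_div (hτ : 0 < τ) (n : ℕ) :
    ∫ r in 0..n * τ, G ⌈r / τ⌉₊ = τ • ∑ i ∈ Finset.range n, G (i + 1) := by
  rw [Finset.smul_sum, ← Finset.sum_congr rfl fun i _ => integral_comp_ceil_div_step G hτ i]
  simpa using (intervalIntegral.sum_integral_adjacent_intervals (a := fun i : ℕ => i * τ)
    fun i _ => intervalIntegrable_comp_ceil_div_step G hτ i).symm

theorem norm_sub_add_integral_comp_ceil_div_le {U : ℕ → E} {l M t : ℝ} (hτ : 0 < τ)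
    (ht : 0 ≤ t) (he : ∀ i, ‖U (i + 1) - U i + τ • G (i + 1)‖ ≤ τ * l)
    (hG : ∀ i ≤ ⌈t / τ⌉₊, ‖G i‖ ≤ M) :
    ‖U ⌈t / τ⌉₊ - U 0 + ∫ r in 0..t, G ⌈r / τ⌉₊‖ ≤ ⌈t / τ⌉₊ * τ * l + M * τ := by
  set n := ⌈t / τ⌉₊
  have htn : t ≤ n * τ := le_ceil_div_mul hτ t
  have hint := intervalIntegrable_comp_ceil_div G hτ n
  have hdecomp : U n - U 0 + ∫ r in 0..t, G ⌈r / τ⌉₊ =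
      ∑ i ∈ Finset.range n, (U (i + 1) - U i + τ • G (i + 1)) -
        ∫ r in t..n * τ, G ⌈r / τ⌉₊ := by
    rw [← intervalIntegral.integral_interval_sub_left hint
      (hint.mono_set (uIcc_subset_uIcc_left (mem_uIcc_of_le ht htn))),
      integral_comp_ceil_div G hτ, Finset.sum_add_distrib, Finset.sum_range_sub,
      Finset.smul_sum]
    abel
  have hsum : ‖∑ i ∈ Finset.range n, (U (i + 1) - U i + τ • G (i + 1))‖ ≤ n * τ * l := by
    refine (norm_sum_le _ _).trans ((Finset.sum_le_sum fun i _ => he i).trans_eq ?_)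
    simp [mul_assoc]
  have htail : ‖∫ r in t..n * τ, G ⌈r / τ⌉₊‖ ≤ M * τ := by
    refine (intervalIntegral.norm_integral_le_of_norm_le_const fun r hr => hG _ ?_).trans ?_
    · rw [uIoc_of_le htn] at hr
      exact Nat.ceil_le.2 ((div_le_iff₀ hτ).2 hr.2)
    · have := ceil_div_mul_le hτ ht
      have hM : 0 ≤ M := (norm_nonneg _).trans (hG 0 (Nat.zero_le _))
      rw [abs_of_nonneg (by linarith)]
      gcongr
      linarith
  rw [hdecomp]
  exact (norm_sub_le _ _).trans (add_le_add hsum htail)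

end StepFunction

section IntegralEquation

variable {E : Type*} [NormedAddCommGroup E] [NormedSpace ℝ E]
  {g : E → E} {u : ℝ → E} {u₀ : E} {T : ℝ}

theorem eq_sub_integral_of_tendsto {w : ℕ → ℝ → E} {M : ℝ} (hg : Continuous g)
    (hmeas : ∀ k, AEStronglyMeasurable (w k) (volume.restrict (Icc 0 T)))
    (hM : ∀ k, ∀ r ∈ Icc 0 T, ‖g (w k r)‖ ≤ M)
    (hw : ∀ t ∈ Icc 0 T, Tendsto (fun k => w k t) atTop (𝓝 (u t)))
    (herr : ∀ t ∈ Icc 0 T,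
      Tendsto (fun k => w k t - u₀ + ∫ r in 0..t, g (w k r)) atTop (𝓝 0))
    {t : ℝ} (ht : t ∈ Icc 0 T) : u t = u₀ - ∫ r in 0..t, g (u r) := by
  have hsub : Ι 0 t ⊆ Icc 0 T := by
    rw [uIoc_of_le ht.1]; exact Ioc_subset_Icc_self.trans (Icc_subset_Icc le_rfl ht.2)
  have hdom : Tendsto (fun k => ∫ r in 0..t, g (w k r)) atTop (𝓝 (∫ r in 0..t, g (u r))) :=
    intervalIntegral.tendsto_integral_filter_of_dominated_convergence (fun _ => M)
      (Eventually.of_forall fun k => hg.comp_aestronglyMeasurable ((hmeas k).mono_set hsub))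
      (Eventually.of_forall fun k => ae_of_all _ fun r hr => hM k r (hsub hr))
      intervalIntegrable_const
      (ae_of_all _ fun r hr => (hg.tendsto _).comp (hw r (hsub hr)))
  have hlim := tendsto_nhds_unique (((hw t ht).sub_const u₀).add hdom) (herr t ht)
  rw [sub_add_eq_add_sub, sub_eq_zero] at hlim
  exact eq_sub_of_add_eq hlim

variable [CompleteSpace E]

theorem hasDerivWithinAt_of_eq_sub_integral (hg : Continuous g)
    (hint : IntegrableOn (fun r => g (u r)) (Icc 0 T))
    (hu : ∀ t ∈ Icc 0 T, u t = u₀ - ∫ r in 0..t, g (u r)) {t : ℝ} (ht : t ∈ Icc 0 T) :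
    HasDerivWithinAt u (-g (u t)) (Icc 0 T) t := by
  have hT : 0 ≤ T := ht.1.trans ht.2
  have hcont : ContinuousOn u (Icc 0 T) := by
    rw [← uIcc_of_le hT] at hint ⊢
    exact (continuousOn_const.sub (intervalIntegral.continuousOn_primitive_interval hint)).congr
      fun s hs => hu s (by rwa [← uIcc_of_le hT])
  have hgu : ContinuousOn (fun r => g (u r)) (Icc 0 T) := hg.comp_continuousOn hcont
  have : Fact (t ∈ Icc 0 T) := ⟨ht⟩
  have hprim := intervalIntegral.integral_hasDerivWithinAt_right (s := Icc 0 T)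
    (hgu.mono (Icc_subset_Icc le_rfl ht.2) |>.intervalIntegrable_of_Icc ht.1)
    (hgu.stronglyMeasurableAtFilter_nhdsWithin measurableSet_Icc t) (hgu t ht)
  exact (hprim.const_sub u₀).congr hu (hu t ht)

theorem hasDerivWithinAt_of_tendsto {w : ℕ → ℝ → E} {M : ℝ} (hg : Continuous g)
    (hmeas : ∀ k, AEStronglyMeasurable (w k) (volume.restrict (Icc 0 T)))
    (hM : ∀ k, ∀ r ∈ Icc 0 T, ‖g (w k r)‖ ≤ M)
    (hw : ∀ t ∈ Icc 0 T, Tendsto (fun k => w k t) atTop (𝓝 (u t)))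
    (herr : ∀ t ∈ Icc 0 T,
      Tendsto (fun k => w k t - u₀ + ∫ r in 0..t, g (w k r)) atTop (𝓝 0))
    {t : ℝ} (ht : t ∈ Icc 0 T) : HasDerivWithinAt u (-g (u t)) (Icc 0 T) t := by
  have hlim : ∀ r ∈ Icc 0 T, Tendsto (fun k => g (w k r)) atTop (𝓝 (g (u r))) :=
    fun r hr => (hg.tendsto _).comp (hw r hr)
  have hint : IntegrableOn (fun r => g (u r)) (Icc 0 T) :=
    .of_bound measure_Icc_lt_top
      (aestronglyMeasurable_of_tendsto_ae atTop
        (fun k => hg.comp_aestronglyMeasurable (hmeas k))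
        (ae_restrict_of_forall_mem measurableSet_Icc hlim)) M
      (ae_restrict_of_forall_mem measurableSet_Icc fun r hr =>
        le_of_tendsto' (hlim r hr).norm fun k => hM k r hr)
  exact hasDerivWithinAt_of_eq_sub_integral hg hint
    (fun s hs => eq_sub_integral_of_tendsto hg hmeas hM hw herr hs) ht

end IntegralEquation

theorem ContDiff.continuous_gradient {H : Type*} [NormedAddCommGroup H] [InnerProductSpace ℝ H]
    [CompleteSpace H] {φ : H → ℝ} {n : WithTop ℕ∞} (hφ : ContDiff ℝ n φ) (hn : n ≠ 0) :
    Continuous (gradient φ) :=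
  (toDual ℝ H).symm.continuous.comp (hφ.continuous_fderiv hn)

theorem minimizing_movements_converge_to_gradient_flow
    {H : Type*} [NormedAddCommGroup H] [InnerProductSpace ℝ H] [FiniteDimensional ℝ H]
    (φ : H → ℝ) (hφ : ContDiff ℝ 1 φ)
    (φτ : ℝ → H → ℝ) (ℓ : ℝ → ℝ) (hℓnn : ∀ τ, 0 ≤ ℓ τ)
    (hℓ0 : Tendsto ℓ (nhdsWithin 0 (Ioi 0)) (nhds 0))
    (hℓ : ∀ τ > (0:ℝ), ∀ x y : H, (φτ τ y - φ y) - (φτ τ x - φ x) ≤ ℓ τ * ‖y - x‖)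
    (u₀ : H) (T : ℝ) (hT : 0 < T) (u : ℝ → H)
    (τk : ℕ → ℝ) (hτpos : ∀ k, 0 < τk k) (hτ0 : Tendsto τk atTop (nhds 0))
    (U : ℕ → ℕ → H) (hU0 : ∀ k, U k 0 = u₀)
    (hmin : ∀ k n, ∀ V : H,
      1 / (2 * τk k) * ‖U k (n + 1) - U k n‖ ^ 2 + φτ (τk k) (U k (n + 1)) ≤
        1 / (2 * τk k) * ‖V - U k n‖ ^ 2 + φτ (τk k) V)
    (hconv : ∀ t ∈ Icc (0:ℝ) T,
      Tendsto (fun k => U k ⌈t / τk k⌉₊) atTop (nhds (u t))) :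
    u 0 = u₀ ∧ ∀ t ∈ Icc (0:ℝ) T, HasDerivWithinAt u (-gradient φ (u t)) (Icc 0 T) t := by
  have hgrad := hφ.continuous_gradient one_ne_zero
  have hℓτ : Tendsto (fun k => ℓ (τk k)) atTop (𝓝 0) :=
    hℓ0.comp (tendsto_nhdsWithin_iff.2 ⟨hτ0, Eventually.of_forall hτpos⟩)
  have heuler k i : ‖U k (i + 1) - U k i + τk k • gradient φ (U k (i + 1))‖ ≤ τk k * ℓ (τk k) :=
    norm_sub_add_smul_gradient_le (hτpos k) (hℓnn _) (hφ.differentiable one_ne_zero _)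
      (hℓ _ (hτpos k) _) (hmin k i)
  obtain ⟨b, hb⟩ := hτ0.bddAbove_range
  have hNτ k t (ht : t ∈ Icc 0 T) : ⌈t / τk k⌉₊ * τk k ≤ T + b :=
    (ceil_div_mul_le (hτpos k) ht.1).trans (add_le_add ht.2 (hb ⟨k, rfl⟩))
  obtain ⟨B, hB⟩ := exists_norm_sub_le_of_isMinimizingMovement hφ.continuous hτpos hmin hU0
    (fun k y => hℓ _ (hτpos k) y u₀) hℓτ (fun k => hNτ k T ⟨hT.le, le_rfl⟩) (hconv T ⟨hT.le, le_rfl⟩)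
  obtain ⟨M, hM⟩ := (isCompact_closedBall u₀ B).exists_bound_of_continuousOn hgrad.continuousOn
  have hgradU k t (ht : t ∈ Icc 0 T) i (hi : i ≤ ⌈t / τk k⌉₊) : ‖gradient φ (U k i)‖ ≤ M :=
    hM _ (mem_closedBall_iff_norm.2 (hB k i (hi.trans
      (Nat.ceil_mono (div_le_div_of_nonneg_right ht.2 (hτpos k).le)))))
  have herr : ∀ t ∈ Icc 0 T, Tendsto (fun k => U k ⌈t / τk k⌉₊ - u₀ +
      ∫ r in 0..t, gradient φ (U k ⌈r / τk k⌉₊)) atTop (𝓝 0) := by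
    intro t ht
    refine squeeze_zero_norm (fun k => ?_)
      (by simpa using (hℓτ.const_mul (T + b)).add (hτ0.const_mul M))
    rw [← hU0 k]
    calc _ ≤ ⌈t / τk k⌉₊ * τk k * ℓ (τk k) + M * τk k :=
          norm_sub_add_integral_comp_ceil_div_le _ (hτpos k) ht.1 (heuler k) (hgradU k t ht)
      _ ≤ (T + b) * ℓ (τk k) + M * τk k := by gcongr; exacts [hℓnn _, hNτ k t ht]
  exact ⟨tendsto_nhds_unique (hconv 0 ⟨le_rfl, hT.le⟩) (by simp [hU0]), fun t ht =>
    hasDerivWithinAt_of_tendsto hgrad (fun k => aestronglyMeasurable_comp_ceil_div (U k) _) (fun k r hr => hgradU k r hr _ le_rfl) hconv herr ht⟩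
end
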